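/- Let (G, D_G) be a Dirac Lie group and H a closed connected subgroup. For a Lagrangian subspace D ⊆ g × g* satisfying g₀ × {0} ⊆ D ⊆ g × p₁, the subset D'(g) = {(x^L(g) + v_g, ξ^L(g)) | (x,ξ) ∈ D, (v_g, ξ^L(g)) ∈ D_G(g)} is a Dirac structure on G, and D'(e) = D. -/

import Mathlib

open scoped Manifold
noncomputable section
namespace DiracPaper

section LagrGen
variable {V : Type*} [NormedAddCommGroup V] [NormedSpace ℝ V]

/-- A subspace of `V ⊕ V*` is Lagrangian if it coincides with its orthogonal for the
canonical pairing `⟨(x,ξ),(y,η)⟩ = ξ(y) + η(x)`. -/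
def IsLagr (D : Submodule ℝ (V × (V →L[ℝ] ℝ))) : Prop :=
  ∀ p : V × (V →L[ℝ] ℝ), p ∈ D ↔ ∀ q ∈ D, p.2 q.1 + q.2 p.1 = 0

end LagrGen

variable {E : Type*} [NormedAddCommGroup E] [NormedSpace ℝ E]
variable {G : Type*} [TopologicalSpace G] [ChartedSpace E G] [Group G] [LieGroup 𝓘(ℝ, E) (⊤ : ℕ∞) G]

/-- The differential of left translation `L_g` at the point `h` (all tangent spaces being
identified with the model space `E`). -/
def dL (g h : G) : E →L[ℝ] E := mfderiv 𝓘(ℝ, E) 𝓘(ℝ, E) (fun x => g * x) h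

/-- The differential of right translation `R_h` at the point `g`. -/
def dR (h g : G) : E →L[ℝ] E := mfderiv 𝓘(ℝ, E) 𝓘(ℝ, E) (fun x => x * h) g

/-- The differential at the neutral element of a real valued function on `G`. -/
def d1 (f : G → ℝ) : E →L[ℝ] ℝ := mfderiv 𝓘(ℝ, E) 𝓘(ℝ, ℝ) f (1 : G)

/-- The left invariant vector field associated to `x ∈ 𝔤 = T_e G`. -/
def xL (x : E) (g : G) : E := dL g 1 x

/-- The left invariant one-form associated to `ξ ∈ 𝔤*`: `ξ^L(g) = (T_g L_{g⁻¹})^* ξ`. -/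
def leftForm (ξ : E →L[ℝ] ℝ) (g : G) : E →L[ℝ] ℝ := ξ.comp (dL g⁻¹ g)

/-- The right invariant one-form associated to `ξ ∈ 𝔤*`: `ξ^R(g) = (T_g R_{g⁻¹})^* ξ`. -/
def rightForm (ξ : E →L[ℝ] ℝ) (g : G) : E →L[ℝ] ℝ := ξ.comp (dR g⁻¹ g)

/-- The adjoint action of `G` on `𝔤 = T_e G`. -/
def Ad (g : G) : E →L[ℝ] E := mfderiv 𝓘(ℝ, E) 𝓘(ℝ, E) (fun x => g * x * g⁻¹) 1

variable (G) in
/-- The adjoint action of `𝔤` on itself, obtained by differentiating `Ad` at `e`;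
`adCLM G x y = ⁅x, y⁆`. -/
def adCLM : E →L[ℝ] E →L[ℝ] E :=
  mfderiv 𝓘(ℝ, E) 𝓘(ℝ, E →L[ℝ] E) (Ad : G → (E →L[ℝ] E)) 1

variable (G) in
/-- The Lie bracket on `𝔤 = T_e G`. -/
def bra (x y : E) : E := adCLM G x y

variable (G) in
/-- The coadjoint action: `(coadW G x ξ) y = ξ ⁅y, x⁆`, i.e. `ad_x^* ξ`. -/
def coadW (x : E) (ξ : E →L[ℝ] ℝ) : E →L[ℝ] ℝ := ξ.comp ((adCLM G).flip x)


/-- Multiplicativity of a field of subspaces `D(g) ⊆ T_g G ⊕ T_g^* G`: group multiplication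
is a forward Dirac map. -/
def MultDirac (D : G → Submodule ℝ (E × (E →L[ℝ] ℝ))) : Prop :=
  ∀ g h : G, ∀ p ∈ D (g * h), ∃ w u : E, ∃ β γ : E →L[ℝ] ℝ,
    (w, β) ∈ D g ∧ (u, γ) ∈ D h ∧ dR h g w + dL g h u = p.1 ∧
    β = p.2.comp (dR h g) ∧ γ = p.2.comp (dL g h)

/-- `𝔤₀ = G₀(e)`, the kernel of the Dirac structure at the neutral element. -/
def g0set (D : G → Submodule ℝ (E × (E →L[ℝ] ℝ))) : Set E := {x | (x, 0) ∈ D 1}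

/-- `𝔭₁ = P₁(e)`, the characteristic codistribution at the neutral element. -/
def p1set (D : G → Submodule ℝ (E × (E →L[ℝ] ℝ))) : Set (E →L[ℝ] ℝ) :=
  {ξ | ∃ x, (x, ξ) ∈ D 1}

/-- A smooth vector field `X = X_ξ` such that `(X_ξ, ξ^L)` is a section of `D`. -/
def SmoothSec (D : G → Submodule ℝ (E × (E →L[ℝ] ℝ))) (ξ : E →L[ℝ] ℝ) (X : G → E) : Prop :=
  ContMDiff 𝓘(ℝ, E) 𝓘(ℝ, E) (⊤ : ℕ∞) X ∧ ∀ g, (X g, leftForm ξ g) ∈ D g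

/-- `p1br η X_ξ = [ξ, η] = d_e (η^L (X_ξ))`, the bracket of `ξ, η ∈ 𝔭₁` computed with a
choice of vector field `X_ξ`. -/
def p1br (η : E →L[ℝ] ℝ) (X : G → E) : E →L[ℝ] ℝ := d1 (fun g => leftForm η g (X g))

/-- `z ∈ 𝔤` represents `ad_η^* x ∈ 𝔤/𝔤₀ = 𝔭₁^*`, which is defined by
`(ad_η^* x)(θ) = [θ, η](x)`. -/
def RepAdStar (D : G → Submodule ℝ (E × (E →L[ℝ] ℝ))) (η : E →L[ℝ] ℝ) (x z : E) : Prop :=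
  ∀ θ ∈ p1set D, ∀ Xθ : G → E, SmoothSec D θ Xθ → θ z = p1br η Xθ x

/-- A one-parameter subgroup `c` of `G` with derivative `x` at `0` (playing the role of
`t ↦ exp (t x)`). -/
def OneParam (c : ℝ → G) (x : E) : Prop :=
  ContMDiff 𝓘(ℝ, ℝ) 𝓘(ℝ, E) (⊤ : ℕ∞) c ∧ c 0 = 1 ∧ (∀ s t : ℝ, c (s + t) = c s * c t) ∧
    (id (mfderiv 𝓘(ℝ, ℝ) 𝓘(ℝ, E) c 0 (1 : ℝ)) : E) = x

section Courant

variable {F : Type*} [NormedAddCommGroup F] [NormedSpace ℝ F]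
variable {M : Type*} [TopologicalSpace M] [ChartedSpace F M]

/-- The Lie bracket of two vector fields, computed in the trivialization of the tangent
bundle given by the identification `TangentSpace 𝓘(ℝ,F) m = F`. -/
def vLie (X Y : M → F) (m : M) : F :=
  (id (mfderiv 𝓘(ℝ, F) 𝓘(ℝ, F) Y m (X m)) : F) -
    (id (mfderiv 𝓘(ℝ, F) 𝓘(ℝ, F) X m (Y m)) : F)

/-- The Lie derivative `£_X β` of a one-form `β` along a vector field `X`, in the same
trivialization. -/
def lieDform (X : M → F) (β : M → (F →L[ℝ] ℝ)) (m : M) : F →L[ℝ] ℝ :=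
  (id (mfderiv 𝓘(ℝ, F) 𝓘(ℝ, F →L[ℝ] ℝ) β m (X m)) : F →L[ℝ] ℝ) +
    (β m).comp (id (mfderiv 𝓘(ℝ, F) 𝓘(ℝ, F) X m) : F →L[ℝ] F)

/-- The contraction `i_Y dα`, in the same trivialization. -/
def iotaDform (Y : M → F) (α : M → (F →L[ℝ] ℝ)) (m : M) : F →L[ℝ] ℝ :=
  (id (mfderiv 𝓘(ℝ, F) 𝓘(ℝ, F →L[ℝ] ℝ) α m (Y m)) : F →L[ℝ] ℝ) -
    (id (mfderiv 𝓘(ℝ, F) 𝓘(ℝ, F →L[ℝ] ℝ) α m) : F →L[ℝ] (F →L[ℝ] ℝ)).flip (Y m)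

/-- Integrability of a Dirac structure: closure of the space of smooth sections under the
Courant–Dorfman bracket `[(X,α),(Y,β)] = ([X,Y], £_X β − i_Y dα)`. -/
def CourantClosed (D : M → Submodule ℝ (F × (F →L[ℝ] ℝ))) : Prop :=
  ∀ (X Y : M → F) (α β : M → (F →L[ℝ] ℝ)),
    ContMDiff 𝓘(ℝ, F) 𝓘(ℝ, F) (⊤ : ℕ∞) X → ContMDiff 𝓘(ℝ, F) 𝓘(ℝ, F →L[ℝ] ℝ) (⊤ : ℕ∞) α →
    ContMDiff 𝓘(ℝ, F) 𝓘(ℝ, F) (⊤ : ℕ∞) Y → ContMDiff 𝓘(ℝ, F) 𝓘(ℝ, F →L[ℝ] ℝ) (⊤ : ℕ∞) β →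
    (∀ m, (X m, α m) ∈ D m) → (∀ m, (Y m, β m) ∈ D m) →
    ∀ m, (vLie X Y m, lieDform X β m - iotaDform Y α m) ∈ D m

end Courant

/-!
Left translation identifies `D'(g)` with the tensor product `𝔇 ⋆ L_g^* D_G(g)`, where
`A ⋆ B = {(x + v, ξ) | (x, ξ) ∈ A, (v, ξ) ∈ B}`. For Lagrangian `A` and `B`, `A ⋆ B` is
Lagrangian as soon as every covector annihilating `{x | (x, 0) ∈ A}` is the covector of some
element of `B`. Here `{x | (x, 0) ∈ 𝔇} ⊇ 𝔤₀`; multiplicativity at `(e, e)` splits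
`D_G(e) = 𝔤₀ × 𝔭₁`, so that `𝔤₀° = 𝔭₁`, and multiplicativity at `(g⁻¹, g)` shows that `ξ^L(g)`
is a covector of `D_G(g)` for every `ξ ∈ 𝔭₁`. Finally `D'(e) = 𝔇` because `𝔇 ⊆ D'(e)` and
both are Lagrangian.
-/

section LinearAlgebra

variable {V W : Type*} [NormedAddCommGroup V] [NormedSpace ℝ V]
  [NormedAddCommGroup W] [NormedSpace ℝ W]

def diracTensor (A B : Submodule ℝ (V × (V →L[ℝ] ℝ))) : Submodule ℝ (V × (V →L[ℝ] ℝ)) where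
  carrier := {p | ∃ x v, (x, p.2) ∈ A ∧ (v, p.2) ∈ B ∧ p.1 = x + v}
  zero_mem' := ⟨0, 0, zero_mem A, zero_mem B, (add_zero 0).symm⟩
  add_mem' := by
    rintro p q ⟨x, v, hx, hv, hp⟩ ⟨y, w, hy, hw, hq⟩
    refine ⟨x + y, v + w, add_mem hx hy, add_mem hv hw, ?_⟩
    simp only [Prod.fst_add, hp, hq]
    abel
  smul_mem' := by
    rintro c p ⟨x, v, hx, hv, hp⟩
    exact ⟨c • x, c • v, A.smul_mem c hx, B.smul_mem c hv, by simp [hp, smul_add]⟩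

theorem IsLagr.eq_of_le {A B : Submodule ℝ (V × (V →L[ℝ] ℝ))} (hA : IsLagr A) (hB : IsLagr B)
    (hAB : A ≤ B) : A = B :=
  le_antisymm hAB fun p hp => (hA p).2 fun q hq => (hB p).1 hp q (hAB hq)

theorem IsLagr.diracTensor {A B : Submodule ℝ (V × (V →L[ℝ] ℝ))} (hA : IsLagr A)
    (hB : IsLagr B)
    (hforms : ∀ ξ : V →L[ℝ] ℝ, (∀ x, (x, 0) ∈ A → ξ x = 0) → ∃ v, (v, ξ) ∈ B) :
    IsLagr (diracTensor A B) := by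
  have hAB : ∀ q ∈ A, ∃ w, (w, q.2) ∈ B := fun q hq =>
    hforms q.2 fun x hx => by simpa using (hA q).1 hq (x, 0) hx
  intro p
  constructor
  · rintro ⟨x, v, hx, hv, hp⟩ q ⟨y, w, hy, hw, hq⟩
    have hxy := (hA _).1 hx _ hy
    have hvw := (hB _).1 hv _ hw
    simp only [map_add, hp, hq] at hxy hvw ⊢
    linarith
  · intro hp
    -- `p.2` annihilates `ker A`, since `(x, 0) ∈ A ⋆ B` for every `(x, 0) ∈ A`.
    obtain ⟨W, hW⟩ := hforms p.2 fun x hx => by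
      simpa using hp (x, 0) ⟨x, 0, hx, zero_mem B, (add_zero x).symm⟩
    refine ⟨p.1 - W, W, (hA _).2 fun q hq => ?_, hW, (sub_add_cancel _ _).symm⟩
    obtain ⟨w, hw⟩ := hAB q hq
    have hpq := hp (q.1 + w, q.2) ⟨q.1, w, hq, hw, rfl⟩
    have hWw := (hB _).1 hW _ hw
    simp only [map_add, map_sub] at hpq hWw ⊢
    linarith

def diracMap (e : V ≃L[ℝ] W) : (V × (V →L[ℝ] ℝ)) ≃ₗ[ℝ] (W × (W →L[ℝ] ℝ)) :=
  e.toLinearEquiv.prodCongr (e.arrowCongr (.refl ℝ ℝ)).toLinearEquiv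

@[simp]
theorem diracMap_apply (e : V ≃L[ℝ] W) (p : V × (V →L[ℝ] ℝ)) :
    diracMap e p = (e p.1, p.2.comp (e.symm : W →L[ℝ] V)) :=
  rfl

theorem diracMap_symm (e : V ≃L[ℝ] W) : (diracMap e).symm = diracMap e.symm :=
  rfl

theorem IsLagr.map_diracMap {S : Submodule ℝ (V × (V →L[ℝ] ℝ))} (hS : IsLagr S)
    (e : V ≃L[ℝ] W) : IsLagr (S.map (diracMap e).toLinearMap) := by
  intro p
  rw [Submodule.mem_map_equiv, hS, diracMap_symm]
  constructor
  · rintro h _ ⟨q, hq, rfl⟩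
    simpa using h q hq
  · intro h q hq
    simpa using h _ (Submodule.mem_map_of_mem hq)

theorem IsLagr.comap_diracMap {S : Submodule ℝ (W × (W →L[ℝ] ℝ))} (hS : IsLagr S)
    (e : V ≃L[ℝ] W) : IsLagr (S.comap (diracMap e).toLinearMap) := by
  rw [Submodule.comap_equiv_eq_map_symm, diracMap_symm]
  exact hS.map_diracMap e.symm

end LinearAlgebra

section Identity

omit [LieGroup 𝓘(ℝ, E) (⊤ : ℕ∞) G]

theorem dL_one_left (h : G) : dL (1 : G) h = ContinuousLinearMap.id ℝ E := by
  have hid : (fun x : G => 1 * x) = id := funext one_mul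
  rw [dL, hid, mfderiv_id]
  rfl

theorem dR_one_left (g : G) : dR (1 : G) g = ContinuousLinearMap.id ℝ E := by
  have hid : (fun x : G => x * 1) = id := funext mul_one
  rw [dR, hid, mfderiv_id]
  rfl

@[simp]
theorem xL_add (x y : E) (g : G) : xL (x + y) g = xL x g + xL y g :=
  map_add _ x y

theorem xL_one (x : E) : xL x (1 : G) = x := by
  rw [xL, dL_one_left]
  rfl

theorem leftForm_one (ξ : E →L[ℝ] ℝ) : leftForm ξ (1 : G) = ξ := by
  rw [leftForm, inv_one, dL_one_left, ContinuousLinearMap.comp_id]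

variable {D : G → Submodule ℝ (E × (E →L[ℝ] ℝ))}

-- Multiplicativity at `(e, e)` writes `p = (w + u, ξ)` with `(w, ξ), (u, ξ) ∈ D(e)`.
theorem MultDirac.zero_fst_mem_one (hD : MultDirac D) {p : E × (E →L[ℝ] ℝ)} (hp : p ∈ D 1) :
    ((0 : E), p.2) ∈ D 1 := by
  obtain ⟨w, u, β, γ, hw, hu, hsum, rfl, rfl⟩ := hD 1 1 p (by rwa [one_mul])
  simp only [dR_one_left, dL_one_left, ContinuousLinearMap.comp_id,
    ContinuousLinearMap.id_apply] at hw hu hsum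
  convert sub_mem (add_mem hw hu) hp using 1
  ext <;> simp [← hsum]

theorem MultDirac.fst_zero_mem_one (hD : MultDirac D) {p : E × (E →L[ℝ] ℝ)} (hp : p ∈ D 1) :
    (p.1, (0 : E →L[ℝ] ℝ)) ∈ D 1 := by
  convert sub_mem hp (hD.zero_fst_mem_one hp) using 1
  ext <;> simp

theorem MultDirac.mem_p1set_of_forall_g0set (hD : MultDirac D) (hD1 : IsLagr (D 1))
    {ξ : E →L[ℝ] ℝ} (hξ : ∀ x ∈ g0set D, ξ x = 0) : ξ ∈ p1set D :=
  ⟨0, (hD1 _).2 fun q hq => by simpa using hξ q.1 (hD.fst_zero_mem_one hq)⟩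

theorem MultDirac.exists_leftForm_mem (hD : MultDirac D) {ξ : E →L[ℝ] ℝ} (hξ : ξ ∈ p1set D)
    (g : G) : ∃ v, (v, leftForm ξ g) ∈ D g := by
  obtain ⟨z, hz⟩ := hξ
  obtain ⟨-, u, -, -, -, hu, -, -, rfl⟩ := hD g⁻¹ g (z, ξ) (by rwa [inv_mul_cancel])
  exact ⟨u, hu⟩

end Identity

section LeftTranslation

theorem dL_mul (g h k : G) : dL (g * h) k = (dL g (h * k)).comp (dL h k : E →L[ℝ] E) := by
  have hcomp : (fun x : G => g * h * x) = (g * ·) ∘ (h * ·) := by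
    funext x
    simp [mul_assoc]
  rw [dL, hcomp, mfderiv_comp k mdifferentiableAt_mul_left mdifferentiableAt_mul_left]
  rfl

theorem dL_comp_dL_inv (g : G) : (dL g 1).comp (dL g⁻¹ g) = ContinuousLinearMap.id ℝ E := by
  have h := dL_mul (E := E) g g⁻¹ g
  rwa [mul_inv_cancel, inv_mul_cancel, dL_one_left, eq_comm] at h

theorem dL_inv_comp_dL (g : G) : (dL g⁻¹ g).comp (dL g 1) = ContinuousLinearMap.id ℝ E := by
  have h := dL_mul (E := E) g⁻¹ g 1
  rwa [mul_one, inv_mul_cancel, dL_one_left, eq_comm] at h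

def dLEquiv (g : G) : E ≃L[ℝ] E :=
  .equivOfInverse' (dL g 1) (dL g⁻¹ g) (dL_comp_dL_inv g) (dL_inv_comp_dL g)

@[simp]
theorem dLEquiv_apply (g : G) (x : E) : dLEquiv g x = xL x g :=
  rfl

@[simp]
theorem comp_dLEquiv_symm (g : G) (ξ : E →L[ℝ] ℝ) :
    ξ.comp ((dLEquiv (E := E) g).symm : E →L[ℝ] E) = leftForm ξ g :=
  rfl

@[simp]
theorem xL_dLEquiv_symm (g : G) (v : E) : xL ((dLEquiv g).symm v) g = v :=
  (dLEquiv g).apply_symm_apply v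

/-- The family `D'` of the theorem: `D'(g)` is the left translate of `𝔇 ⋆ L_g^* D(g)`. -/
def pullbackDirac (D : G → Submodule ℝ (E × (E →L[ℝ] ℝ))) (𝔇 : Submodule ℝ (E × (E →L[ℝ] ℝ)))
    (g : G) : Submodule ℝ (E × (E →L[ℝ] ℝ)) :=
  (diracTensor 𝔇 ((D g).comap (diracMap (dLEquiv g)).toLinearMap)).map
    (diracMap (dLEquiv g)).toLinearMap

theorem mem_pullbackDirac {D : G → Submodule ℝ (E × (E →L[ℝ] ℝ))}
    {𝔇 : Submodule ℝ (E × (E →L[ℝ] ℝ))} {g : G} {p : E × (E →L[ℝ] ℝ)} :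
    p ∈ pullbackDirac D 𝔇 g ↔ ∃ (x : E) (ξ : E →L[ℝ] ℝ) (v : E),
      (x, ξ) ∈ 𝔇 ∧ (v, leftForm ξ g) ∈ D g ∧ p = (xL x g + v, leftForm ξ g) := by
  constructor
  · rintro ⟨⟨y, ξ⟩, ⟨x, u, hx, hu, rfl⟩, rfl⟩
    exact ⟨x, ξ, xL u g, hx, by simpa using hu, by simp⟩
  · rintro ⟨x, ξ, v, hx, hv, rfl⟩
    refine ⟨(x + (dLEquiv g).symm v, ξ), ⟨x, (dLEquiv g).symm v, hx, ?_, rfl⟩, ?_⟩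
    · simpa using hv
    · simp

end LeftTranslation

theorem pullback_dirac_structure_Dprime_general
    (D : G → Submodule ℝ (E × (E →L[ℝ] ℝ)))
    (hLag : ∀ g : G, IsLagr (D g)) (hMult : MultDirac D)
    (𝔇 : Submodule ℝ (E × (E →L[ℝ] ℝ))) (h𝔇 : IsLagr 𝔇)
    (hlow : ∀ x ∈ g0set D, (x, (0 : E →L[ℝ] ℝ)) ∈ 𝔇)
    (hup : ∀ p ∈ 𝔇, p.2 ∈ p1set D) :
    ∃ D' : G → Submodule ℝ (E × (E →L[ℝ] ℝ)),
      (∀ (g : G) (p : E × (E →L[ℝ] ℝ)),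
        p ∈ D' g ↔ ∃ (x : E) (ξ : E →L[ℝ] ℝ) (v : E),
          (x, ξ) ∈ 𝔇 ∧ (v, leftForm ξ g) ∈ D g ∧ p = (xL x g + v, leftForm ξ g)) ∧
      (∀ g : G, IsLagr (D' g)) ∧
      (∀ p : E × (E →L[ℝ] ℝ), p ∈ D' 1 ↔ p ∈ 𝔇) := by
  have hLagr : ∀ g, IsLagr (pullbackDirac D 𝔇 g) := by
    intro g
    refine (h𝔇.diracTensor ((hLag g).comap_diracMap _) fun ξ hξ => ?_).map_diracMap _
    have hξp1 : ξ ∈ p1set D :=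
      hMult.mem_p1set_of_forall_g0set (hLag 1) fun x hx => hξ x (hlow x hx)
    obtain ⟨w, hw⟩ := hMult.exists_leftForm_mem hξp1 g
    exact ⟨(dLEquiv g).symm w, by simpa using hw⟩
  have h𝔇le : 𝔇 ≤ pullbackDirac D 𝔇 1 := fun p hp => by
    obtain ⟨z, hz⟩ := hup p hp
    refine mem_pullbackDirac.2 ⟨p.1, p.2, 0, hp, ?_, by simp [xL_one, leftForm_one]⟩
    simpa [leftForm_one] using hMult.zero_fst_mem_one hz
  exact ⟨pullbackDirac D 𝔇, fun g p => mem_pullbackDirac, hLagr,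
    fun p => SetLike.ext_iff.mp (h𝔇.eq_of_le (hLagr 1) h𝔇le).symm p⟩

theorem pullback_dirac_structure_Dprime
    (D : G → Submodule ℝ (E × (E →L[ℝ] ℝ)))
    (hLag : ∀ g : G, IsLagr (D g)) (hMult : MultDirac D)
    (H : Subgroup G) (hHclosed : IsClosed (H : Set G)) (hHconn : IsConnected (H : Set G))
    (𝔇 : Submodule ℝ (E × (E →L[ℝ] ℝ))) (h𝔇 : IsLagr 𝔇)
    (hlow : ∀ x ∈ g0set D, (x, (0 : E →L[ℝ] ℝ)) ∈ 𝔇)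
    (hup : ∀ p ∈ 𝔇, p.2 ∈ p1set D) :
    ∃ D' : G → Submodule ℝ (E × (E →L[ℝ] ℝ)),
      (∀ (g : G) (p : E × (E →L[ℝ] ℝ)),
        p ∈ D' g ↔ ∃ (x : E) (ξ : E →L[ℝ] ℝ) (v : E),
          (x, ξ) ∈ 𝔇 ∧ (v, leftForm ξ g) ∈ D g ∧ p = (xL x g + v, leftForm ξ g)) ∧
      (∀ g : G, IsLagr (D' g)) ∧
      (∀ p : E × (E →L[ℝ] ℝ), p ∈ D' 1 ↔ p ∈ 𝔇) :=
  pullback_dirac_structure_Dprime_general D hLag hMult 𝔇 h𝔇 hlow hup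

end DiracPaper
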